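/- arXiv:quant-ph/0006100 — 2 statements merged into one kernel-verified Lean document; each statement's English description precedes it below -/
import Mathlib

section
/- The entanglement entropy S(r) = cosh²r · log₂(cosh²r) − sinh²r · log₂(sinh²r) is strictly increasing on (0, ∞). -/
open Real Set

private lemma aux_deriv (u : ℝ) (hu : 0 < u) :
    HasDerivAt (fun u : ℝ => ((u + 1) * Real.log (u + 1) - u * Real.log u) * (Real.log 2)⁻¹)
      ((Real.log (u + 1) - Real.log u) * (Real.log 2)⁻¹) u := by
  have h1 : HasDerivAt (fun u : ℝ => (u + 1) * Real.log (u + 1))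
      (Real.log (u + 1) + 1) u := by
    have := (((hasDerivAt_id u).add_const 1).mul
      ((Real.hasDerivAt_log (by simp; linarith)).comp u ((hasDerivAt_id u).add_const 1)))
    refine this.congr_deriv ?_
    simp only [id, Function.comp_apply]
    have hu1 : u + 1 ≠ 0 := by linarith
    field_simp
  have h2 : HasDerivAt (fun u : ℝ => u * Real.log u) (Real.log u + 1) u := by
    have := (hasDerivAt_id u).mul (Real.hasDerivAt_log (ne_of_gt hu))
    refine this.congr_deriv ?_
    simp only [id, Function.comp_apply]
    have hu1 : u + 1 ≠ 0 := by linarith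
    field_simp
  have h3 := (h1.sub h2).mul_const (Real.log 2)⁻¹
  refine h3.congr_deriv ?_
  ring

private lemma aux_f_strictMono :
    StrictMonoOn (fun u : ℝ => (u + 1) * Real.logb 2 (u + 1) - u * Real.logb 2 u)
      (Set.Ioi 0) := by
  have heq : (fun u : ℝ => (u + 1) * Real.logb 2 (u + 1) - u * Real.logb 2 u)
      = fun u : ℝ => ((u + 1) * Real.log (u + 1) - u * Real.log u) * (Real.log 2)⁻¹ := by
    funext v; simp [Real.logb, div_eq_mul_inv]; ring
  rw [heq]
  apply strictMonoOn_of_deriv_pos (convex_Ioi 0)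
  · intro u hu
    exact (aux_deriv u hu).continuousAt.continuousWithinAt
  · rw [interior_Ioi]
    intro u hu
    have hu0 : (0:ℝ) < u := hu
    rw [(aux_deriv u hu0).deriv]
    have h1 : Real.log u < Real.log (u + 1) := Real.log_lt_log hu0 (by linarith)
    have h2 : (0:ℝ) < Real.log 2 := Real.log_pos (by norm_num)
    exact mul_pos (by linarith) (inv_pos.mpr h2)

/-- The entanglement entropy `S(r) = cosh²r log₂(cosh²r) − sinh²r log₂(sinh²r)`
is strictly increasing on `(0, ∞)`. -/
theorem entanglement_entropy_strictMonoOn :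
    StrictMonoOn (fun r : ℝ =>
      Real.cosh r ^ 2 * Real.logb 2 (Real.cosh r ^ 2)
        - Real.sinh r ^ 2 * Real.logb 2 (Real.sinh r ^ 2)) (Set.Ioi 0) := by
  have hg : StrictMonoOn (fun r : ℝ => Real.sinh r ^ 2) (Set.Ioi 0) := by
    intro a ha b hb hab
    have h1 : Real.sinh a < Real.sinh b := Real.sinh_lt_sinh.mpr hab
    have h2 : 0 < Real.sinh a := Real.sinh_pos_iff.mpr ha
    exact pow_lt_pow_left₀ h1 h2.le (by norm_num)
  have hmaps : Set.MapsTo (fun r : ℝ => Real.sinh r ^ 2) (Set.Ioi 0) (Set.Ioi 0) := by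
    intro r hr
    exact pow_pos (Real.sinh_pos_iff.mpr hr) 2
  have := aux_f_strictMono.comp hg hmaps
  have heq : ((fun u : ℝ => (u + 1) * Real.logb 2 (u + 1) - u * Real.logb 2 u) ∘
      fun r : ℝ => Real.sinh r ^ 2)
      = fun r : ℝ => Real.cosh r ^ 2 * Real.logb 2 (Real.cosh r ^ 2)
        - Real.sinh r ^ 2 * Real.logb 2 (Real.sinh r ^ 2) := by
    funext r
    simp [Function.comp, Real.cosh_sq]
  rwa [heq] at this
end

section
/- For a bipartite density matrix on a finite-dimensional Hilbert space of the form ρ = ∑_{m,n} a_{m,n} |φ_m ⊗ ψ_m⟩⟨φ_n ⊗ ψ_n| where {φ_n} and {ψ_n} are orthonormal families, the state σ = ∑_n a_{n,n} |φ_n ⊗ ψ_n⟩⟨φ_n ⊗ ψ_n| is separable, and the quantum relative entropy satisfies S(ρ‖σ) = −∑_n a_{n,n} log₂ a_{n,n} + Tr(ρ log₂ ρ). -/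
open Matrix

section helpers
set_option linter.unusedSectionVars false
variable {n : Type*} [Fintype n] [DecidableEq n]

lemma my_vmv_mulVec (x y w : n → ℂ) : vecMulVec x y *ᵥ w = (y ⬝ᵥ w) • x := by
  ext i; simp [mulVec, vecMulVec_apply, dotProduct, Finset.mul_sum, mul_comm, mul_left_comm]

lemma my_mul_vmv (M : Matrix n n ℂ) (x y : n → ℂ) :
    M * vecMulVec x y = vecMulVec (M *ᵥ x) y := by
  ext i j; simp [mul_apply, vecMulVec_apply, mulVec, dotProduct, Finset.sum_mul, mul_assoc]

lemma my_trace_vmv (x y : n → ℂ) : (vecMulVec x y).trace = y ⬝ᵥ x := by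
  simp [trace, diag, vecMulVec_apply, dotProduct, mul_comm]

lemma my_sum_mulVec {ι : Type*} (s : Finset ι) (M : ι → Matrix n n ℂ) (x : n → ℂ) :
    (∑ i ∈ s, M i) *ᵥ x = ∑ i ∈ s, M i *ᵥ x := by
  ext j
  simp only [mulVec, dotProduct, Finset.sum_apply, Matrix.sum_apply, Finset.sum_mul]
  rw [Finset.sum_comm]

lemma my_dot_sum (x : n → ℂ) {ι : Type*} (s : Finset ι) (w : ι → n → ℂ) :
    x ⬝ᵥ (∑ i ∈ s, w i) = ∑ i ∈ s, x ⬝ᵥ w i := by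
  simp only [dotProduct, Finset.sum_apply, Finset.mul_sum]
  rw [Finset.sum_comm]

lemma my_cfc_mulVec_eigen {A : Matrix n n ℂ} (hA : A.IsHermitian) (f : ℝ → ℝ)
    (w : n → ℂ) (l : ℝ) (hw : A *ᵥ w = (l : ℂ) • w) :
    hA.cfc f *ᵥ w = ((f l : ℝ) : ℂ) • w := by
  set U : Matrix n n ℂ := (Matrix.IsHermitian.eigenvectorUnitary hA : Matrix n n ℂ) with hU
  have hkey : ∀ j, hA.eigenvalues j ≠ l → star (⇑(hA.eigenvectorBasis j)) ⬝ᵥ w = 0 := by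
    intro j hj
    have hadj : (star (⇑(hA.eigenvectorBasis j)) ᵥ* A) = star (A *ᵥ ⇑(hA.eigenvectorBasis j)) := by
      rw [star_mulVec, hA.eq]
    have h1 : star (⇑(hA.eigenvectorBasis j)) ⬝ᵥ (A *ᵥ w)
        = ((hA.eigenvalues j : ℝ) : ℂ) * (star (⇑(hA.eigenvectorBasis j)) ⬝ᵥ w) := by
      rw [dotProduct_mulVec, hadj, hA.mulVec_eigenvectorBasis]
      simp [star_smul, smul_dotProduct, Complex.real_smul]
    rw [hw] at h1
    have h2 : ((l : ℝ) : ℂ) * (star (⇑(hA.eigenvectorBasis j)) ⬝ᵥ w)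
        = ((hA.eigenvalues j : ℝ) : ℂ) * (star (⇑(hA.eigenvectorBasis j)) ⬝ᵥ w) := by
      simpa [dotProduct_smul] using h1
    by_contra hne
    have := mul_right_cancel₀ hne h2
    exact hj (by exact_mod_cast this.symm)
  have hUU : U * star U = 1 :=
    (Matrix.mem_unitaryGroup_iff).mp (Matrix.IsHermitian.eigenvectorUnitary hA).2
  rw [Matrix.IsHermitian.cfc, Unitary.conjStarAlgAut_apply, ← hU, ← Matrix.mulVec_mulVec, ← Matrix.mulVec_mulVec]
  have hdiag : diagonal (RCLike.ofReal ∘ f ∘ hA.eigenvalues) *ᵥ (star U *ᵥ w)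
      = ((f l : ℝ) : ℂ) • (star U *ᵥ w) := by
    ext j
    have hcj : (star U *ᵥ w) j = star (⇑(hA.eigenvectorBasis j)) ⬝ᵥ w := by
      simp [mulVec, dotProduct, hU]
    rw [mulVec_diagonal]
    by_cases hj : hA.eigenvalues j = l
    · simp [hj]
    · simp [Pi.smul_apply, hcj, hkey j hj]
  rw [hdiag, Matrix.mulVec_smul, Matrix.mulVec_mulVec, hUU, Matrix.one_mulVec]

end helpers

open Matrix ComplexOrder in
/-- A bipartite state on `ℂ^{d₁} ⊗ ℂ^{d₂}` (realized as matrices indexed by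
`Fin d₁ × Fin d₂`) is separable if it is a convex combination of pure product
states. -/
def SeparableState {d₁ d₂ : ℕ} (σ : Matrix (Fin d₁ × Fin d₂) (Fin d₁ × Fin d₂) ℂ) : Prop :=
  ∃ (m : ℕ) (p : Fin m → ℝ) (x : Fin m → Fin d₁ → ℂ) (y : Fin m → Fin d₂ → ℂ),
    (∀ i, 0 ≤ p i) ∧ (∑ i, p i = 1) ∧
    (∀ i, ∑ j, star (x i j) * x i j = 1) ∧
    (∀ i, ∑ j, star (y i j) * y i j = 1) ∧
    σ = ∑ i, (p i : ℂ) •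
      Matrix.vecMulVec (fun q => x i q.1 * y i q.2) (star fun q => x i q.1 * y i q.2)

open Matrix ComplexOrder in
/-- For a density matrix `ρ = ∑_{m,n} a m n |φ_m ⊗ ψ_m⟩⟨φ_n ⊗ ψ_n|` with `φ`, `ψ`
orthonormal families, the state `σ = ∑_n a n n |φ_n ⊗ ψ_n⟩⟨φ_n ⊗ ψ_n|` is
separable, and the quantum relative entropy satisfies
`S(ρ‖σ) = Tr[ρ(log₂ρ − log₂σ)] = −∑_n a_{n,n} log₂ a_{n,n} + Tr(ρ log₂ ρ)`. -/
theorem relative_entropy_of_entanglement_formula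
    {d₁ d₂ K : ℕ} (φ : Fin K → Fin d₁ → ℂ) (ψ : Fin K → Fin d₂ → ℂ)
    (hφ : ∀ m n, ∑ i, star (φ m i) * φ n i = if m = n then 1 else 0)
    (hψ : ∀ m n, ∑ i, star (ψ m i) * ψ n i = if m = n then 1 else 0)
    (v : Fin K → Fin d₁ × Fin d₂ → ℂ)
    (hv : ∀ n, v n = fun q => φ n q.1 * ψ n q.2)
    (a : Fin K → Fin K → ℂ)
    (ρ σ : Matrix (Fin d₁ × Fin d₂) (Fin d₁ × Fin d₂) ℂ)
    (hρdef : ρ = ∑ m, ∑ n, a m n • vecMulVec (v m) (star (v n)))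
    (hσdef : σ = ∑ n, a n n • vecMulVec (v n) (star (v n)))
    (hρ : ρ.PosSemidef) (htr : ρ.trace = 1) (hσh : σ.IsHermitian) :
    SeparableState σ ∧
    (ρ * hρ.1.cfc (Real.logb 2) - ρ * hσh.cfc (Real.logb 2)).trace
      = (↑(-∑ n, (a n n).re * Real.logb 2 (a n n).re) : ℂ)
        + (ρ * hρ.1.cfc (Real.logb 2)).trace := by
  -- orthonormality of the product vectors
  have hvv : ∀ m n, star (v m) ⬝ᵥ v n = if m = n then 1 else 0 := by
    intro m n
    have h1 : star (v m) ⬝ᵥ v n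
        = (∑ i, star (φ m i) * φ n i) * (∑ j, star (ψ m j) * ψ n j) := by
      rw [hv m, hv n, Fintype.sum_mul_sum]
      rw [dotProduct, Fintype.sum_prod_type]
      refine Finset.sum_congr rfl fun i _ => Finset.sum_congr rfl fun j _ => ?_
      simp only [Pi.star_apply, star_mul']
      ring
    rw [h1, hφ, hψ]
    by_cases h : m = n <;> simp [h]
  -- ρ acting on v
  have hρv : ∀ k, ρ *ᵥ v k = ∑ m, (a m k * 1) • v m := by
    intro k
    rw [hρdef, my_sum_mulVec]
    refine Finset.sum_congr rfl fun m _ => ?_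
    rw [my_sum_mulVec]
    have : ∀ p, (a m p • vecMulVec (v m) (star (v p))) *ᵥ v k
        = (a m p * (if p = k then 1 else 0)) • v m := by
      intro p
      rw [smul_mulVec, my_vmv_mulVec, hvv, smul_smul]
    simp only [this]
    rw [Finset.sum_congr rfl fun p (_ : p ∈ Finset.univ) => rfl]
    rw [show (∑ p, (a m p * if p = k then 1 else 0) • v m)
        = ∑ p, (if p = k then (a m k * 1) • v m else 0) from
      Finset.sum_congr rfl fun p _ => by by_cases h : p = k <;> simp [h]]
    simp
  have hρv' : ∀ k, ρ *ᵥ v k = ∑ m, a m k • v m := by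
    intro k; rw [hρv k]; simp
  -- diagonal entries are nonneg reals
  have haa : ∀ n, a n n = ((a n n).re : ℂ) ∧ 0 ≤ (a n n).re := by
    intro n
    have hdot : star (v n) ⬝ᵥ (ρ *ᵥ v n) = a n n := by
      rw [hρv' n, my_dot_sum]
      have : ∀ m, star (v n) ⬝ᵥ (a m n • v m) = a m n * (if n = m then 1 else 0) := by
        intro m; rw [dotProduct_smul, hvv]; simp
      simp only [this]
      simp
    have h0 := hρ.dotProduct_mulVec_nonneg (v n)
    rw [hdot] at h0
    rw [Complex.le_def] at h0
    simp only [Complex.zero_re, Complex.zero_im] at h0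
    refine ⟨Complex.ext (by simp) (by simp [← h0.2]), h0.1⟩
  -- σ acting on v
  have hσv : ∀ k, σ *ᵥ v k = (( (a k k).re : ℝ) : ℂ) • v k := by
    intro k
    rw [hσdef, my_sum_mulVec]
    have : ∀ p, (a p p • vecMulVec (v p) (star (v p))) *ᵥ v k
        = (if p = k then a k k • v k else 0) := by
      intro p
      rw [smul_mulVec, my_vmv_mulVec, hvv]
      by_cases h : p = k <;> simp [h]
    simp only [this]
    rw [Finset.sum_ite_eq' Finset.univ k (fun _ => a k k • v k)]
    simp [← (haa k).1]
  -- trace of ρ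
  have htrρ : (∑ n, a n n) = 1 := by
    have : ρ.trace = ∑ n, a n n := by
      rw [hρdef, trace_sum]
      have h1 : ∀ m, (∑ n, a m n • vecMulVec (v m) (star (v n))).trace = a m m := by
        intro m
        rw [trace_sum]
        have : ∀ p, (a m p • vecMulVec (v m) (star (v p))).trace
            = a m p * (if p = m then 1 else 0) := by
          intro p
          rw [trace_smul, my_trace_vmv, hvv]
          simp [smul_eq_mul]
        simp only [this]
        simp
      simp only [h1]
    rw [this] at htr; exact htr
  have hsum : ∑ n, (a n n).re = 1 := by
    have := congrArg Complex.re htrρ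
    simpa [Complex.re_sum] using this
  constructor
  · refine ⟨K, fun n => (a n n).re, φ, ψ, fun n => (haa n).2, hsum,
      fun i => by simpa using hφ i i, fun i => by simpa using hψ i i, ?_⟩
    rw [hσdef]
    refine Finset.sum_congr rfl fun k _ => ?_
    rw [← hv k, ← (haa k).1]
  · -- the trace identity
    have key : (ρ * hσh.cfc (Real.logb 2)).trace
        = ((∑ n, (a n n).re * Real.logb 2 (a n n).re : ℝ) : ℂ) := by
      rw [hρdef, Finset.sum_mul, trace_sum]
      have h1 : ∀ m, ((∑ n, a m n • vecMulVec (v m) (star (v n))) * hσh.cfc (Real.logb 2)).trace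
          = ((a m m).re * Real.logb 2 ((a m m).re) : ℝ) := by
        intro m
        rw [Finset.sum_mul, trace_sum]
        have h2 : ∀ p, ((a m p • vecMulVec (v m) (star (v p))) * hσh.cfc (Real.logb 2)).trace
            = (if p = m then a m m * ((Real.logb 2 ((a m m).re) : ℝ) : ℂ) else 0) := by
          intro p
          rw [smul_mul_assoc, trace_smul, trace_mul_comm, my_mul_vmv,
            my_cfc_mulVec_eigen hσh (Real.logb 2) (v m) ((a m m).re) (hσv m),
            my_trace_vmv, dotProduct_smul, hvv]
          by_cases h : p = m
          · subst h; simp [smul_eq_mul]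
          · simp [h, smul_eq_mul]
        simp only [h2]
        rw [Finset.sum_ite_eq' Finset.univ m
          (fun _ => a m m * ((Real.logb 2 ((a m m).re) : ℝ) : ℂ))]
        simp only [Finset.mem_univ, if_true]
        rw [(haa m).1]
        simp [Complex.ofReal_re, ← Complex.ofReal_mul, mul_comm]
      simp only [h1]
      push_cast
      rfl
    rw [Matrix.trace_sub, key]
    push_cast
    ring
end
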